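/- arXiv:2207.08372 — 8 statements merged into one kernel-verified Lean document; each statement's English description precedes it below -/
import Mathlib

section
/- A k-deletion correcting code is capable of correcting any combination of r deletions and s insertions whenever r + s ≤ k: if C is a set of binary sequences of length n such that no two distinct codewords have a common subsequence of length n - k, then no two distinct codewords c, c' ∈ C can be transformed into the same sequence by applying r deletions and s insertions to c and r' deletions and s' insertions to c', where r + s ≤ k and r' + s' ≤ k and the resulting sequences have equal length. -/
/-- Two sublists of a list have a common sublist whose length is at least
`u.length + v.length - e.length`. -/
lemma common_sublist {α : Type*} {u v e : List α} (hu : u.Sublist e) (hv : v.Sublist e) :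
    ∃ t : List α, t.Sublist u ∧ t.Sublist v ∧
      u.length + v.length ≤ e.length + t.length := by
  induction hu generalizing v with
  | slnil =>
    obtain rfl := List.sublist_nil.mp hv
    exact ⟨[], List.Sublist.refl _, List.Sublist.refl _, by simp⟩
  | cons a hu ih =>
    rename_i u' e'
    rcases hv with _ | ⟨_, hv⟩ | ⟨_, hv⟩
    case cons =>
      obtain ⟨t, h1, h2, h3⟩ := ih hv
      exact ⟨t, h1, h2, by simp at h3 ⊢; omega⟩
    case cons_cons =>
      rename_i v'
      obtain ⟨t, h1, h2, h3⟩ := ih hv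
      exact ⟨t, h1, h2.cons a, by simp at h3 ⊢; omega⟩
  | cons_cons a hu ih =>
    rename_i u' e'
    rcases hv with _ | ⟨_, hv⟩ | ⟨_, hv⟩
    case cons =>
      obtain ⟨t, h1, h2, h3⟩ := ih hv
      exact ⟨t, h1.cons a, h2, by simp at h3 ⊢; omega⟩
    case cons_cons =>
      rename_i v'
      obtain ⟨t, h1, h2, h3⟩ := ih hv
      exact ⟨a :: t, h1.cons₂ a, h2.cons₂ a, by simp at h3 ⊢; omega⟩

/-- Levenshtein: a `k`-deletion correcting code corrects any
combination of `r` deletions and `s` insertions with `r + s ≤ k`.  Saying that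
`e` is obtained from `c` by `r` deletions and `s` insertions is expressed by the
existence of a common sublist `w` of `c` and `e` with `|c| = |w| + r` and
`|e| = |w| + s`. -/
theorem stmt2 (n k : ℕ) (C : Set (List Bool))
    (hlen : ∀ c ∈ C, c.length = n)
    (hcode : ∀ c ∈ C, ∀ c' ∈ C, c ≠ c' →
      ∀ w : List Bool, w.length = n - k → ¬(w.Sublist c ∧ w.Sublist c'))
    (c c' : List Bool) (hc : c ∈ C) (hc' : c' ∈ C) (hne : c ≠ c')
    (r s r' s' : ℕ) (hrs : r + s ≤ k) (hrs' : r' + s' ≤ k)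
    (e : List Bool)
    (he : ∃ w : List Bool, w.Sublist c ∧ w.Sublist e ∧
      c.length = w.length + r ∧ e.length = w.length + s)
    (he' : ∃ w : List Bool, w.Sublist c' ∧ w.Sublist e ∧
      c'.length = w.length + r' ∧ e.length = w.length + s') :
    False := by
  obtain ⟨w, hwc, hwe, hcl, hel⟩ := he
  obtain ⟨w', hwc', hwe', hcl', hel'⟩ := he'
  obtain ⟨t, htw, htw', hlen_t⟩ := common_sublist hwe hwe'
  have hn : c.length = n := hlen c hc
  have hn' : c'.length = n := hlen c' hc'
  -- t has length at least n - k
  have hkey : n - k ≤ t.length := by omega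
  refine hcode c hc c' hc' hne (t.take (n - k)) ?_ ⟨?_, ?_⟩
  · simp [Nat.min_eq_left hkey]
  · exact ((t.take_sublist _).trans htw).trans hwc
  · exact ((t.take_sublist _).trans htw').trans hwc'
end

section
/- If a binary sequence c of length n satisfies c_i = c_{i+p} for all i ∈ [1, n-p] (c has period p) and also c_i = c_{i+q} for all i ∈ [1, n-q] (c has period q) with p + q ≤ n, then c has period gcd(p,q), i.e., c_i = c_{i+gcd(p,q)} for all i ∈ [1, n - gcd(p,q)]. -/
/-!
Euclid's algorithm on periods: if `p ≤ q` are periods with `p + q ≤ n`, then `q - p` is a period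
too (every position can be moved by `+q` then `-p`, or, near the right end, by `-p` then `+q`),
and `gcd p (q - p) = gcd p q`. Since `p + (q - p) < p + q`, induction terminates at `gcd p q`.
-/

def HasPeriod {α : Type*} (c : ℕ → α) (n p : ℕ) : Prop :=
  ∀ i, 1 ≤ i → i + p ≤ n → c i = c (i + p)

namespace HasPeriod

variable {α : Type*} {c : ℕ → α} {n p q : ℕ}

theorem tsub (hpq : p + q ≤ n) (hp : HasPeriod c n p) (hq : HasPeriod c n q) :
    HasPeriod c n (q - p) := by
  intro j hj hjn
  rcases le_or_gt p q with hle | hlt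
  · rcases le_or_gt (j + q) n with hjq | hjq
    · calc c j = c (j + q) := hq j hj hjq
        _ = c (j + (q - p) + p) := congrArg c (by omega)
        _ = c (j + (q - p)) := (hp _ (by omega) (by omega)).symm
    · calc c j = c (j - p + p) := congrArg c (by omega)
        _ = c (j - p) := (hp _ (by omega) (by omega)).symm
        _ = c (j - p + q) := hq _ (by omega) (by omega)
        _ = c (j + (q - p)) := congrArg c (by omega)
  · simp [Nat.sub_eq_zero_of_le hlt.le]

theorem gcd {p q : ℕ} (hpq : p + q ≤ n) (hp : HasPeriod c n p) (hq : HasPeriod c n q) :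
    HasPeriod c n (p.gcd q) := by
  rcases Nat.eq_zero_or_pos p with rfl | hp0
  · simpa using hq
  rcases Nat.eq_zero_or_pos q with rfl | hq0
  · simpa using hp
  rcases le_total p q with hle | hle
  · rw [← Nat.gcd_sub_self_right hle]
    exact gcd (by omega) hp (hp.tsub hpq hq)
  · rw [← Nat.gcd_sub_self_left hle]
    exact gcd (by omega) (hq.tsub (by omega) hp) hq
termination_by p + q

end HasPeriod

/-- Fine–Wilf: if a binary sequence `c` (1-based, positions
`[1,n]`) has periods `p` and `q` with `p + q ≤ n`, then it has period
`gcd(p,q)`. -/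
theorem stmt3 (n p q : ℕ) (c : ℕ → Bool)
    (hpq : p + q ≤ n)
    (hp : ∀ i, 1 ≤ i → i + p ≤ n → c i = c (i + p))
    (hq : ∀ i, 1 ≤ i → i + q ≤ n → c i = c (i + q)) :
    ∀ i, 1 ≤ i → i + Nat.gcd p q ≤ n → c i = c (i + Nat.gcd p q) :=
  HasPeriod.gcd (c := c) hpq hp hq
end

section
/- For any integers k ≥ 1 and n, there exists an injective function F : {0,1}^n → {0,1}^{n+k+1} such that for every c ∈ {0,1}^n, every subsequence of consecutive bits of F(c) having period at most k has length at most 3k + 2 + ⌈log₂ n⌉, i.e., L(F(c), ≤ k) ≤ 3k + 2 + ⌈log₂ n⌉. -/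
/-- Counting lemma: the number of strings of length `N` that are `ℓ`-periodic on a
window `[a, a+L]` is at most `2 ^ (N - (L + 1 - ℓ))`. -/
lemma Bcard {N : ℕ} (a ℓ L : ℕ) (hl1 : 1 ≤ ℓ) (hlL : ℓ ≤ L) (hN : a + L < N) :
    (Finset.univ.filter (fun s : Fin N → Bool => ∀ j j' : Fin N, a ≤ (j : ℕ) →
      (j' : ℕ) = (j : ℕ) + ℓ → (j' : ℕ) ≤ a + L → s j = s j')).card
      ≤ 2 ^ (N - (L + 1 - ℓ)) := by
  classical
  set D : Finset (Fin N) :=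
    Finset.univ.filter (fun i => a + ℓ ≤ (i : ℕ) ∧ (i : ℕ) ≤ a + L) with hD
  have hDcard : L + 1 - ℓ ≤ D.card := by
    have hmaps : ∀ j ∈ Finset.range (L + 1 - ℓ),
        (if h : a + ℓ + j < N then (⟨a + ℓ + j, h⟩ : Fin N) else ⟨0, by omega⟩) ∈ D := by
      intro j hj
      rw [Finset.mem_range] at hj
      have h : a + ℓ + j < N := by omega
      rw [dif_pos h]
      simp only [hD, Finset.mem_filter, Finset.mem_univ, true_and]
      omega
    have hinj : Set.InjOn (fun j => (if h : a + ℓ + j < N then (⟨a + ℓ + j, h⟩ : Fin N)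
        else ⟨0, by omega⟩)) (Finset.range (L + 1 - ℓ)) := by
      intro x hx y hy hxy
      simp only [Finset.coe_range, Set.mem_Iio] at hx hy
      have h1 : a + ℓ + x < N := by omega
      have h2 : a + ℓ + y < N := by omega
      have hxy' : (⟨a + ℓ + x, h1⟩ : Fin N) = ⟨a + ℓ + y, h2⟩ := by
        simpa [dif_pos h1, dif_pos h2] using hxy
      have := congrArg Fin.val hxy'
      simp only [] at this
      omega
    simpa using Finset.card_le_card_of_injOn _ hmaps hinj
  have hcompl : Fintype.card {i : Fin N // i ∉ D} = N - D.card := by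
    simp [Fintype.card_subtype_compl]
  have hmaps : ∀ s ∈ (Finset.univ.filter (fun s : Fin N → Bool =>
      ∀ j j' : Fin N, a ≤ (j : ℕ) → (j' : ℕ) = (j : ℕ) + ℓ → (j' : ℕ) ≤ a + L →
      s j = s j')), (fun x : {i : Fin N // i ∉ D} => s x.1) ∈
      (Finset.univ : Finset ({i : Fin N // i ∉ D} → Bool)) := fun _ _ => Finset.mem_univ _
  have hinj : Set.InjOn (fun (s : Fin N → Bool) => (fun x : {i : Fin N // i ∉ D} => s x.1))
      (Finset.univ.filter (fun s : Fin N → Bool => ∀ j j' : Fin N, a ≤ (j : ℕ) →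
        (j' : ℕ) = (j : ℕ) + ℓ → (j' : ℕ) ≤ a + L → s j = s j')) := by
    intro s hs t ht hst
    simp only [Finset.coe_filter, Set.mem_setOf_eq, Finset.mem_univ, true_and] at hs ht
    have key : ∀ i : ℕ, ∀ hi : i < N, s ⟨i, hi⟩ = t ⟨i, hi⟩ := by
      intro i
      induction i using Nat.strong_induction_on with
      | _ i ih =>
        intro hi
        by_cases hmem : (⟨i, hi⟩ : Fin N) ∈ D
        · simp only [hD, Finset.mem_filter, Finset.mem_univ, true_and] at hmem
          have hj : i - ℓ < N := by omega
          have hs' : s ⟨i - ℓ, hj⟩ = s ⟨i, hi⟩ :=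
            hs ⟨i - ℓ, hj⟩ ⟨i, hi⟩ (by simp; omega) (by simp; omega) (by simp; omega)
          have ht' : t ⟨i - ℓ, hj⟩ = t ⟨i, hi⟩ :=
            ht ⟨i - ℓ, hj⟩ ⟨i, hi⟩ (by simp; omega) (by simp; omega) (by simp; omega)
          have := ih (i - ℓ) (by omega) hj
          rw [← hs', ← ht', this]
        · exact congrFun hst ⟨⟨i, hi⟩, hmem⟩
    funext x
    exact key x.1 x.2
  calc _ ≤ (Finset.univ : Finset ({i : Fin N // i ∉ D} → Bool)).card :=
        Finset.card_le_card_of_injOn _ hmaps hinj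
    _ = 2 ^ (N - D.card) := by
        rw [Finset.card_univ, Fintype.card_fun, hcompl]; simp
    _ ≤ 2 ^ (N - (L + 1 - ℓ)) := Nat.pow_le_pow_right (by norm_num) (by omega)

/-- Lemma `periodfree`: for any `k ≥ 1` and `n`, there is an
injective map `F : {0,1}^n → {0,1}^{n+k+1}` such that every block of consecutive
bits of `F(c)` (0-based window `[a,b]`) carrying a period `ℓ ∈ [1,k]` has length
at most `3k + 2 + ⌈log₂ n⌉`, i.e. `L(F(c), ≤ k) ≤ 3k + 2 + ⌈log₂ n⌉`. -/
theorem stmt5 (n k : ℕ) (hk : 1 ≤ k) :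
    ∃ F : (Fin n → Bool) → (Fin (n + k + 1) → Bool),
      Function.Injective F ∧
      ∀ c : Fin n → Bool, ∀ a b ℓ : ℕ, 1 ≤ ℓ → ℓ ≤ k → b < n + k + 1 →
        (∀ j j' : Fin (n + k + 1), a ≤ (j : ℕ) → (j' : ℕ) = (j : ℕ) + ℓ →
          (j' : ℕ) ≤ b → F c j = F c j') →
        b + 1 ≤ a + (3 * k + 2 + Nat.clog 2 n) := by
  classical
  set M := Nat.clog 2 n with hM
  by_cases hsmall : n ≤ 2 * k + 1 + M
  · -- trivial padding works since the whole string is short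
    refine ⟨fun c i => if h : (i : ℕ) < n then c ⟨(i : ℕ), h⟩ else false, ?_, ?_⟩
    · intro c c' hcc
      funext i
      have h1 : (i : ℕ) < n + k + 1 := by omega
      have := congrFun hcc ⟨(i : ℕ), h1⟩
      simpa [i.2] using this
    · intro c a b ℓ h1 h2 hb _
      omega
  · push_neg at hsmall
    set N := n + k + 1 with hN
    set L := 3 * k + 2 + M with hL
    set Good : (Fin N → Bool) → Prop := fun s =>
      ∀ a b ℓ : ℕ, 1 ≤ ℓ → ℓ ≤ k → b < N →
        (∀ j j' : Fin N, a ≤ (j : ℕ) → (j' : ℕ) = (j : ℕ) + ℓ → (j' : ℕ) ≤ b →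
          s j = s j') → b + 1 ≤ a + L with hGood
    suffices hcard : 2 ^ n ≤ Fintype.card {s : Fin N → Bool // Good s} by
      have hdom : Fintype.card (Fin n → Bool) = 2 ^ n := by simp
      obtain ⟨e⟩ := Function.Embedding.nonempty_of_card_le (α := Fin n → Bool)
        (β := {s : Fin N → Bool // Good s}) (by rw [hdom]; exact hcard)
      refine ⟨fun c => (e c).1, fun c c' h => e.injective (Subtype.ext h), fun c => (e c).2⟩
    rw [Fintype.card_subtype]
    -- the bad strings
    set B : ℕ → ℕ → Finset (Fin N → Bool) := fun a ℓ =>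
      Finset.univ.filter (fun s => ∀ j j' : Fin N, a ≤ (j : ℕ) →
        (j' : ℕ) = (j : ℕ) + ℓ → (j' : ℕ) ≤ a + L → s j = s j') with hB
    have hsub : Finset.univ.filter (fun s => ¬ Good s) ⊆
        (Finset.range (N - L) ×ˢ Finset.Icc 1 k).biUnion (fun p => B p.1 p.2) := by
      intro s hs
      rw [Finset.mem_filter] at hs
      have hng : ¬ ∀ a b ℓ : ℕ, 1 ≤ ℓ → ℓ ≤ k → b < N →
          (∀ j j' : Fin N, a ≤ (j : ℕ) → (j' : ℕ) = (j : ℕ) + ℓ → (j' : ℕ) ≤ b →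
            s j = s j') → b + 1 ≤ a + L := hs.2
      push_neg at hng
      obtain ⟨a, b, ℓ, h1, h2, hb, hper, hlt⟩ := hng
      rw [Finset.mem_biUnion]
      refine ⟨(a, ℓ), ?_, ?_⟩
      · rw [Finset.mem_product, Finset.mem_range, Finset.mem_Icc]
        constructor
        · omega
        · exact ⟨h1, h2⟩
      · rw [hB, Finset.mem_filter]
        refine ⟨Finset.mem_univ _, fun j j' hj hj' hj'le => ?_⟩
        exact hper j j' hj hj' (by omega)
    have hbadcard : (Finset.univ.filter (fun s => ¬ Good s)).card ≤
        N * k * 2 ^ (N - (L + 1 - k)) := by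
      calc (Finset.univ.filter (fun s => ¬ Good s)).card
          ≤ ((Finset.range (N - L) ×ˢ Finset.Icc 1 k).biUnion (fun p => B p.1 p.2)).card :=
            Finset.card_le_card hsub
        _ ≤ ∑ p ∈ Finset.range (N - L) ×ˢ Finset.Icc 1 k, (B p.1 p.2).card :=
            Finset.card_biUnion_le
        _ ≤ ∑ _p ∈ Finset.range (N - L) ×ˢ Finset.Icc 1 k, 2 ^ (N - (L + 1 - k)) := by
            apply Finset.sum_le_sum
            intro p hp
            rw [Finset.mem_product, Finset.mem_range, Finset.mem_Icc] at hp
            have hpa := hp.1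
            have hpl1 := hp.2.1
            have hplk := hp.2.2
            have h1 : p.1 + L < N := by omega
            calc (B p.1 p.2).card ≤ 2 ^ (N - (L + 1 - p.2)) :=
                  Bcard p.1 p.2 L hpl1 (by omega) h1
              _ ≤ 2 ^ (N - (L + 1 - k)) :=
                  Nat.pow_le_pow_right (by norm_num) (by omega)
        _ = (N - L) * k * 2 ^ (N - (L + 1 - k)) := by
            rw [Finset.sum_const, Finset.card_product, Finset.card_range,
              Nat.card_Icc]
            simp [smul_eq_mul, mul_assoc]
        _ ≤ N * k * 2 ^ (N - (L + 1 - k)) := by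
            apply Nat.mul_le_mul_right
            apply Nat.mul_le_mul_right
            omega
    have hsplit : (Finset.univ.filter Good).card +
        (Finset.univ.filter (fun s => ¬ Good s)).card = 2 ^ N := by
      rw [Finset.card_filter_add_card_filter_not]
      rw [Finset.card_univ, Fintype.card_fun]
      simp
    -- key arithmetic inequality
    have hkey : N * k * 2 ^ (N - (L + 1 - k)) + 2 ^ n ≤ 2 ^ N := by
      have hM2 : n ≤ 2 ^ M := Nat.le_pow_clog (by norm_num) n
      have hk2 : k < 2 ^ k := Nat.lt_two_pow_self (n := k)
      have hexp : N - (L + 1 - k) = n - k - 2 - M := by omega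
      have hprod : N * k * 2 ^ (N - (L + 1 - k)) ≤ 2 ^ (n - 1) := by
        calc N * k * 2 ^ (N - (L + 1 - k))
            ≤ (2 * 2 ^ M) * 2 ^ k * 2 ^ (N - (L + 1 - k)) := by
              apply Nat.mul_le_mul_right
              apply Nat.mul_le_mul (by omega) (le_of_lt hk2)
          _ = 2 ^ (1 + M + k + (N - (L + 1 - k))) := by ring
          _ = 2 ^ (n - 1) := by congr 1; omega
      have h1 : (2:ℕ) ^ (n - 1) ≤ 2 ^ n := Nat.pow_le_pow_right (by norm_num) (by omega)
      have h2 : (2:ℕ) ^ (n + 1) = 2 * 2 ^ n := by ring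
      have h3 : (2:ℕ) ^ (n + 1) ≤ 2 ^ N := Nat.pow_le_pow_right (by norm_num) (by omega)
      omega
    have heq : (Finset.filter Good Finset.univ).card
        = (Finset.filter (fun x => Good x) Finset.univ).card := rfl
    omega
end

section
/- The set of binary sequences of length n whose every periodic-with-period-at-most-k block of consecutive bits has length at most ⌈log₂ n⌉ + k + 1 has size at least 2^{n-1}; equivalently, the code {c ∈ {0,1}^n : L(c, ≤ k) ≤ ⌈log₂ n⌉ + k + 1} has redundancy at most 1 bit. -/
open Finset

lemma count_false_on (n : ℕ) (p : Fin n → Prop) [DecidablePred p] :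
    (Finset.univ.filter (fun f : Fin n → Bool => ∀ j, p j → f j = false)).card
      = 2 ^ ((Finset.univ.filter (fun j => ¬ p j)).card) := by
  have hset : Finset.univ.filter (fun f : Fin n → Bool => ∀ j, p j → f j = false)
      = Fintype.piFinset (fun j => if p j then ({false} : Finset Bool) else Finset.univ) := by
    ext f
    simp only [Finset.mem_filter, Finset.mem_univ, true_and, Fintype.mem_piFinset]
    constructor
    · intro h j
      by_cases hp : p j
      · simp [hp, h j hp]
      · simp [hp]
    · intro h j hp
      have := h j
      simp [hp] at this
      exact this
  rw [hset, Fintype.card_piFinset]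
  have hc : ∀ j : Fin n, (if p j then ({false} : Finset Bool) else Finset.univ).card
      = if p j then 1 else 2 := by
    intro j; split_ifs <;> simp
  rw [Finset.prod_congr rfl (fun j _ => hc j), Finset.prod_ite, Finset.prod_const,
    Finset.prod_const, one_pow, one_mul]

open Classical in
lemma count_interval (n lo hi : ℕ) (hhi : hi ≤ n) :
    (Finset.univ.filter (fun j : Fin n => lo ≤ (j:ℕ) ∧ (j:ℕ) < hi)).card = hi - lo := by
  rw [← Nat.card_Ico lo hi]
  apply Finset.card_bij (fun (j : Fin n) _ => (j : ℕ))
  · intro j hj; simp at hj ⊢; omega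
  · intro j₁ h₁ j₂ h₂ h; exact Fin.ext h
  · intro x hx
    simp at hx
    exact ⟨⟨x, by omega⟩, by simp; omega, rfl⟩

lemma myGeom_le (k : ℕ) : ∑ ℓ ∈ Finset.Icc 1 k, 2 ^ ℓ ≤ 2 ^ (k+1) - 2 := by
  induction k with
  | zero => simp
  | succ k ih =>
    rw [Finset.sum_Icc_succ_top (by omega)]
    have h1 : (2:ℕ) ^ (k+1+1) = 2 * 2 ^ (k+1) := by ring
    have h2 : (2:ℕ) ≤ 2 ^ (k+1) := by
      have := Nat.one_le_two_pow (n := k)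
      calc (2:ℕ) = 2 * 1 := by ring
      _ ≤ 2 * 2^k := by omega
      _ = 2^(k+1) := by ring
    omega

open Classical in
lemma block_card (n t ℓ a : ℕ) (hℓ : 1 ≤ ℓ) (hℓt : ℓ ≤ t) (hwin : a + t < n) :
    (Finset.univ.filter (fun c : Fin n → Bool =>
      ∀ j j' : Fin n, a ≤ (j:ℕ) → (j':ℕ) = (j:ℕ) + ℓ → (j':ℕ) ≤ a + t → c j = c j')).card
      ≤ 2 ^ (n - (t+1) + ℓ) := by
  set p : Fin n → Prop := fun j => a + ℓ ≤ (j:ℕ) ∧ (j:ℕ) < a + t + 1 with hp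
  have hcount : (Finset.univ.filter (fun j : Fin n => ¬ p j)).card = n - (t+1) + ℓ := by
    have hsum := Finset.card_filter_add_card_filter_not
      (s := (Finset.univ : Finset (Fin n))) (p := p)
    have hcard : (Finset.univ : Finset (Fin n)).card = n := by simp
    have hint : (Finset.univ.filter p).card = (a+t+1) - (a+ℓ) := by
      exact count_interval n (a+ℓ) (a+t+1) (by omega)
    omega
  have key : (Finset.univ.filter (fun c : Fin n → Bool =>
      ∀ j j' : Fin n, a ≤ (j:ℕ) → (j':ℕ) = (j:ℕ) + ℓ → (j':ℕ) ≤ a + t → c j = c j')).card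
      ≤ (Finset.univ.filter (fun f : Fin n → Bool => ∀ j, p j → f j = false)).card := by
    apply Finset.card_le_card_of_injOn (fun c => fun j => if p j then false else c j)
    · intro c _
      simp only [Finset.coe_filter, Set.mem_setOf_eq, Finset.mem_filter, Finset.mem_univ, true_and]
      intro j hj
      rw [if_pos hj]
    · intro c₁ hc₁ c₂ hc₂ hφ
      simp only [Finset.coe_filter, Set.mem_setOf_eq, Finset.mem_univ, true_and] at hc₁ hc₂
      have key2 : ∀ N : ℕ, ∀ j : Fin n, (j:ℕ) < N → c₁ j = c₂ j := by
        intro N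
        induction N with
        | zero => intro j h; omega
        | succ N ih =>
          intro j hj
          by_cases hpj : p j
          · have hjn : (j:ℕ) < n := j.isLt
            have hi : (j:ℕ) - ℓ < n := by omega
            set i : Fin n := ⟨(j:ℕ) - ℓ, hi⟩ with hidef
            have hji : (j:ℕ) = (i:ℕ) + ℓ := by simp [hidef]; omega
            have h1 := hc₁ i j (by simp [hidef]; omega) hji (by omega)
            have h2 := hc₂ i j (by simp [hidef]; omega) hji (by omega)
            rw [← h1, ← h2]
            exact ih i (by simp [hidef]; omega)
          · have := congrFun hφ j
            simpa [hpj] using this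
      funext j
      exact key2 ((j:ℕ)+1) j (by omega)
  calc _ ≤ _ := key
  _ = 2 ^ ((Finset.univ.filter (fun j => ¬ p j)).card) := count_false_on n p
  _ = 2 ^ (n - (t+1) + ℓ) := by rw [hcount]

/- STATEMENT 6: the code `{c ∈ {0,1}^n : L(c, ≤ k) ≤ ⌈log₂ n⌉ + k + 1}` has at
least `2^{n-1}` codewords (redundancy at most one bit).  The condition
`L(c, ≤ k) ≤ ⌈log₂ n⌉ + k + 1` is expressed as: every 0-based window `[a,b]`
of `c` carrying a period `ℓ ∈ [1,k]` has length at most `⌈log₂ n⌉ + k + 1`. -/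
open Classical in
theorem stmt6 (n k : ℕ) (hn : 1 ≤ n) :
    2 ^ (n - 1) ≤
      ((Finset.univ : Finset (Fin n → Bool)).filter (fun c =>
        ∀ a b ℓ : ℕ, 1 ≤ ℓ → ℓ ≤ k → b < n →
          (∀ j j' : Fin n, a ≤ (j : ℕ) → (j' : ℕ) = (j : ℕ) + ℓ →
            (j' : ℕ) ≤ b → c j = c j') →
          b + 1 ≤ a + (Nat.clog 2 n + k + 1))).card := by
  set t := Nat.clog 2 n + k + 1 with ht
  set P : (Fin n → Bool) → Prop := fun c =>
    ∀ a b ℓ : ℕ, 1 ≤ ℓ → ℓ ≤ k → b < n →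
      (∀ j j' : Fin n, a ≤ (j : ℕ) → (j' : ℕ) = (j : ℕ) + ℓ →
        (j' : ℕ) ≤ b → c j = c j') →
      b + 1 ≤ a + t with hP
  have hcard : (Finset.univ : Finset (Fin n → Bool)).card = 2 ^ n := by
    rw [Finset.card_univ, Fintype.card_fun, Fintype.card_bool, Fintype.card_fin]
  by_cases hnt : n ≤ t
  · have hall : ∀ c ∈ (Finset.univ : Finset (Fin n → Bool)), P c := by
      intro c _
      simp only [hP]
      intro a b ℓ _ _ hb _
      omega
    rw [Finset.filter_true_of_mem hall, hcard]
    exact Nat.pow_le_pow_right (by norm_num) (by omega)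
  · -- main case : a window of length t+1 fits
    have hsplit := Finset.card_filter_add_card_filter_not
      (s := (Finset.univ : Finset (Fin n → Bool))) (p := P)
    have hpow : (2:ℕ) ^ n = 2 ^ (n-1) + 2 ^ (n-1) := by
      have h1 : n - 1 + 1 = n := by omega
      have h2 := pow_succ 2 (n-1)
      rw [h1] at h2
      omega
    suffices hbad : (Finset.univ.filter (fun c : Fin n → Bool => ¬ P c)).card ≤ 2 ^ (n-1) by
      have h2 : 2^(n-1) + 2^(n-1) ≤ (Finset.univ.filter P).card + 2^(n-1) := by
        calc 2^(n-1) + 2^(n-1) = 2^n := hpow.symm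
        _ = (Finset.univ.filter P).card
            + (Finset.univ.filter (fun c : Fin n → Bool => ¬ P c)).card := by
              rw [hsplit, hcard]
        _ ≤ (Finset.univ.filter P).card + 2^(n-1) := Nat.add_le_add_left hbad _
      exact Nat.le_of_add_le_add_right h2
    -- union bound over windows
    have hsubset : Finset.univ.filter (fun c : Fin n → Bool => ¬ P c) ⊆
        ((Finset.range (n - t)) ×ˢ (Finset.Icc 1 k)).biUnion (fun q =>
          Finset.univ.filter (fun c : Fin n → Bool =>
            ∀ j j' : Fin n, q.1 ≤ (j:ℕ) → (j':ℕ) = (j:ℕ) + q.2 →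
              (j':ℕ) ≤ q.1 + t → c j = c j')) := by
      intro c hc
      simp only [Finset.mem_filter, Finset.mem_univ, true_and, hP] at hc
      push_neg at hc
      obtain ⟨a, b, ℓ, hℓ1, hℓk, hbn, hper, hlen⟩ := hc
      simp only [Finset.mem_biUnion, Finset.mem_product, Finset.mem_range, Finset.mem_Icc,
        Finset.mem_filter, Finset.mem_univ, true_and]
      refine ⟨(a, ℓ), ⟨by omega, hℓ1, hℓk⟩, ?_⟩
      intro j j' hj hj' hj2
      exact hper j j' hj hj' (by omega)
    calc (Finset.univ.filter (fun c : Fin n → Bool => ¬ P c)).card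
        ≤ (((Finset.range (n - t)) ×ˢ (Finset.Icc 1 k)).biUnion (fun q =>
          Finset.univ.filter (fun c : Fin n → Bool =>
            ∀ j j' : Fin n, q.1 ≤ (j:ℕ) → (j':ℕ) = (j:ℕ) + q.2 →
              (j':ℕ) ≤ q.1 + t → c j = c j'))).card := Finset.card_le_card hsubset
      _ ≤ ∑ q ∈ (Finset.range (n - t)) ×ˢ (Finset.Icc 1 k),
          (Finset.univ.filter (fun c : Fin n → Bool =>
            ∀ j j' : Fin n, q.1 ≤ (j:ℕ) → (j':ℕ) = (j:ℕ) + q.2 →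
              (j':ℕ) ≤ q.1 + t → c j = c j')).card := Finset.card_biUnion_le
      _ ≤ ∑ q ∈ (Finset.range (n - t)) ×ˢ (Finset.Icc 1 k), 2 ^ (n - (t+1) + q.2) := by
          apply Finset.sum_le_sum
          intro q hq
          simp only [Finset.mem_product, Finset.mem_range, Finset.mem_Icc] at hq
          exact block_card n t q.2 q.1 hq.2.1 (by omega) (by omega)
      _ = ∑ a ∈ Finset.range (n - t), ∑ ℓ ∈ Finset.Icc 1 k, 2 ^ (n - (t+1) + ℓ) := by
          rw [Finset.sum_product]
      _ = (n - t) * ∑ ℓ ∈ Finset.Icc 1 k, 2 ^ (n - (t+1) + ℓ) := by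
          rw [Finset.sum_const, Finset.card_range, smul_eq_mul]
      _ = (n - t) * (2 ^ (n - (t+1)) * ∑ ℓ ∈ Finset.Icc 1 k, 2 ^ ℓ) := by
          congr 1
          rw [Finset.mul_sum]
          exact Finset.sum_congr rfl (fun ℓ _ => pow_add 2 (n - (t+1)) ℓ)
      _ ≤ 2 ^ (Nat.clog 2 n) * (2 ^ (n - (t+1)) * 2 ^ (k+1)) := by
          apply Nat.mul_le_mul
          · calc n - t ≤ n := Nat.sub_le _ _
              _ ≤ 2 ^ Nat.clog 2 n := Nat.le_pow_clog one_lt_two n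
          · apply Nat.mul_le_mul_left
            calc ∑ ℓ ∈ Finset.Icc 1 k, 2 ^ ℓ ≤ 2 ^ (k+1) - 2 := myGeom_le k
              _ ≤ 2 ^ (k+1) := Nat.sub_le _ _
      _ = 2 ^ (Nat.clog 2 n + (n - (t+1)) + (k+1)) := by ring
      _ = 2 ^ (n - 1) := by congr 1; omega
end

section
/- Suppose a binary sequence c of length N is split into consecutive blocks a_1, …, a_m of length B each (the last possibly shorter), with B > k. If d is a subsequence of c of length N - k, then for each i, the segment d_{[(i-1)B+1, min(iB, N) - k]} is a subsequence of the block a_i. -/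
lemma take_of_sublist {α : Type*} {d c : List α} (h : d.Sublist c) (n : ℕ) :
    (d.take n).Sublist (c.take (n + (c.length - d.length))) := by
  induction h generalizing n with
  | slnil => simp
  | cons a h ih =>
      rename_i d c
      have hd : d.length ≤ c.length := h.length_le
      have : n + ((a :: c).length - d.length) = (n + (c.length - d.length)) + 1 := by
        simp; omega
      rw [this, List.take_succ_cons]
      exact (ih n).cons a
  | cons_cons a h ih =>
      rename_i d c
      cases n with
      | zero => simp
      | succ m =>
          simp only [List.length_cons, Nat.succ_sub_succ]
          have : m + 1 + (c.length - d.length) = (m + (c.length - d.length)) + 1 := by omega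
          rw [this, List.take_succ_cons, List.take_succ_cons]
          exact (ih m).cons₂ a

/-- split `c` (length `N`) into consecutive blocks of length `B > k`,
`a_i = c_{[(i-1)B+1, min(iB,N)]}`.  If `d` is a subsequence of `c` of length
`N - k`, then for each `i ≥ 1` the segment
`d_{[(i-1)B+1, min(iB,N)-k]}` is a subsequence of block `a_i`. -/
theorem stmt7 (k B : ℕ) (hB : k < B) (c d : List Bool)
    (hsub : d.Sublist c) (hlen : d.length + k = c.length)
    (i : ℕ) (hi : 1 ≤ i) :
    ((d.drop ((i - 1) * B)).take (min (i * B) c.length - k - (i - 1) * B)).Sublist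
      ((c.drop ((i - 1) * B)).take B) := by
  obtain ⟨j, rfl⟩ : ∃ j, i = j + 1 := ⟨i - 1, by omega⟩
  set s := (j + 1 - 1) * B with hs
  have hsB : (j + 1) * B = s + B := by simp [hs, Nat.add_mul]
  set t := min ((j + 1) * B) c.length - k - s with ht
  have hdrop : (d.drop s).Sublist (c.drop s) := hsub.drop s
  have hkey := take_of_sublist hdrop t
  set k' := (c.drop s).length - (d.drop s).length with hk'
  have hlens : (c.drop s).length = c.length - s := List.length_drop ..
  have hlend : (d.drop s).length = d.length - s := List.length_drop ..
  have hk'le : k' ≤ k := by omega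
  have hmin : min ((j + 1) * B) c.length ≤ s + B := by
    have := min_le_left ((j + 1) * B) c.length
    omega
  have htk : t + k' ≤ B := by omega
  refine hkey.trans ?_
  have heq : (c.drop s).take (t + k') = ((c.drop s).take B).take (t + k') := by
    rw [List.take_take, min_eq_left htk]
  rw [heq]
  exact List.take_sublist _ _
end

section
/- If for each block a_i of a binary sequence c (split into consecutive blocks of length B > k) there is a hash function Hash such that a_i is uniquely recoverable from any subsequence of a_i of length |a_i| - k together with Hash(a_i), then c is uniquely recoverable from any subsequence d of c of length |c| - k together with the concatenation (Hash(a_1), …, Hash(a_m)). Formally: if c, c' are two sequences of length N with the same block hashes Hash(a_i) = Hash(a'_i) for all i, and some sequence d of length N - k is a common subsequence of both c and c', then c = c'. -/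
lemma take_sub_of_sublist {β : Type*} {d c : List β} (h : d.Sublist c) :
    ∀ n, (d.take (n - (c.length - d.length))).Sublist (c.take n) := by
  induction h with
  | slnil => intro n; simp
  | cons b h ih =>
    intro n
    cases n with
    | zero => simp
    | succ m =>
      have hlen := h.length_le
      rename_i l₁ l₂
      have : m + 1 - ((l₂.length + 1) - l₁.length) = m - (l₂.length - l₁.length) := by
        omega
      simp only [List.length_cons, List.take_succ_cons, this]
      exact (ih m).trans (List.sublist_cons_self b _)
  | cons_cons a h ih =>
    intro n
    cases n with
    | zero => simp
    | succ m =>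
      rename_i l₁ l₂
      have hlen := h.length_le
      set s := l₂.length - l₁.length with hs
      have : (l₂.length + 1) - (l₁.length + 1) = s := by omega
      simp only [List.length_cons, this, List.take_succ_cons]
      by_cases hsm : s ≤ m
      · have : m + 1 - s = (m - s) + 1 := by omega
        rw [this, List.take_succ_cons]
        exact (ih m).cons₂ a
      · have : m + 1 - s = 0 := by omega
        simp [this]

/-- Lemma `splithash`: if `Hash` determines any block among
equal-length blocks with the same hash sharing a common subsequence of length
`|a| - k`, then a sequence `c` of length `N`, split into consecutive blocks of
length `B > k`, is determined by the list of block hashes together with any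
subsequence of length `N - k`: two sequences `c, c'` of length `N` with equal
block hashes and a common subsequence `d` of length `N - k` are equal. -/
theorem stmt8 {α : Type*} (k B N : ℕ) (hB : k < B) (Hash : List Bool → α)
    (hHash : ∀ a a' w : List Bool, a.length = a'.length → Hash a = Hash a' →
      w.Sublist a → w.Sublist a' → w.length = a.length - k → a = a')
    (c c' d : List Bool) (hc : c.length = N) (hc' : c'.length = N)
    (hblocks : ∀ i : ℕ, Hash ((c.drop (i * B)).take B) = Hash ((c'.drop (i * B)).take B))
    (hd : d.Sublist c) (hd' : d.Sublist c') (hdlen : d.length = N - k) :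
    c = c' := by
  induction N using Nat.strong_induction_on generalizing c c' d with
  | _ N ih =>
  by_cases hNB : N ≤ B
  · -- single block
    have hb0 := hblocks 0
    simp only [Nat.zero_mul, List.drop_zero] at hb0
    have hcB : c.take B = c := List.take_of_length_le (by omega)
    have hcB' : c'.take B = c' := List.take_of_length_le (by omega)
    rw [hcB, hcB'] at hb0
    exact hHash c c' d (hc.trans hc'.symm) hb0 hd hd' (by omega)
  · have hdl := hd.length_le
    have hck : c.length - d.length = k := by omega
    have hck' : c'.length - d.length = k := by omega
    have hw : (d.take (B - k)).Sublist (c.take B) := by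
      have := take_sub_of_sublist hd B; rwa [hck] at this
    have hw' : (d.take (B - k)).Sublist (c'.take B) := by
      have := take_sub_of_sublist hd' B; rwa [hck'] at this
    have hb0 := hblocks 0
    simp only [Nat.zero_mul, List.drop_zero] at hb0
    have hfst : c.take B = c'.take B := by
      refine hHash _ _ (d.take (B - k)) ?_ hb0 hw hw' ?_
      · simp [List.length_take, hc, hc']
      · simp only [List.length_take, hc]
        omega
    have htail : c.drop B = c'.drop B := by
      refine ih (N - B) (by omega) (c.drop B) (c'.drop B) (d.drop B)
        (by simp [hc]) (by simp [hc']) ?_ (hd.drop B) (hd'.drop B) (by simp; omega)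
      intro i
      have hmul : (i + 1) * B = B + i * B := by ring
      have := hblocks (i + 1)
      simpa [List.drop_drop, hmul, Nat.add_comm] using this
    calc c = c.take B ++ c.drop B := (List.take_append_drop B c).symm
      _ = c'.take B ++ c'.drop B := by rw [hfst, htail]
      _ = c' := List.take_append_drop B c'
end

section
/- Majority agreement of error-free reads: let c ∈ {0,1}^n with L(c, ≤ k) ≤ T, and let E be a d×n' read matrix obtained from c where head w has deletion set δ_w and insertion set γ_w with total at most k errors. Let i* > 0 be such that all rows of E agree on columns [i*−T−2k−1, i*−1]. If heads w₁ and w₂ both have no errors in [i*−T−2k−1, i*+k−1] (i.e., (δ_{w_j} ∪ γ_{w_j}) ∩ [i*−T−2k−1, i*+k−1] = ∅ for j = 1,2), then E_{w₁, i*} = E_{w₂, i*}. -/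
/-- The read of a sequence `c` (positions `1,…,|c|`) by a head with deletion
positions `δ ⊆ [1,|c|]`, insertion positions `γ ⊆ [0,|c|]` and inserted bits
`b`: bit `c_p` is kept iff `p ∉ δ`, and bit `b p` is inserted right after
position `p` whenever `p ∈ γ` (`p = 0` meaning before `c_1`). -/
def insDelRead (c : List Bool) (δ γ : Finset ℕ) (b : ℕ → Bool) : List Bool :=
  (if 0 ∈ γ then [b 0] else []) ++
    (List.range c.length).flatMap (fun j =>
      (if (j + 1) ∈ δ then [] else [c.getD j false]) ++
        (if (j + 1) ∈ γ then [b (j + 1)] else []))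

namespace Stmt17

/-- the chunk contributed by position `j+1`. -/
def rf (c : List Bool) (δ γ : Finset ℕ) (b : ℕ → Bool) (j : ℕ) : List Bool :=
  (if (j + 1) ∈ δ then [] else [c.getD j false]) ++
    (if (j + 1) ∈ γ then [b (j + 1)] else [])

/-- number of elements of `s` in `[1, m]`. -/
def cnt (s : Finset ℕ) (m : ℕ) : ℕ := ((Finset.range m).filter (fun j => j + 1 ∈ s)).card

/-- number of elements of `s` in `[0, m-1]`. -/
def gcn (s : Finset ℕ) (m : ℕ) : ℕ := ((Finset.range m).filter (fun j => j ∈ s)).card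

lemma cnt_succ (s : Finset ℕ) (m : ℕ) :
    cnt s (m + 1) = cnt s m + (if m + 1 ∈ s then 1 else 0) := by
  unfold cnt
  rw [Finset.range_add_one, Finset.filter_insert]
  split
  · rw [Finset.card_insert_of_notMem (by simp)]
  · simp

lemma gcn_succ (s : Finset ℕ) (m : ℕ) :
    gcn s (m + 1) = gcn s m + (if m ∈ s then 1 else 0) := by
  unfold gcn
  rw [Finset.range_add_one, Finset.filter_insert]
  split
  · rw [Finset.card_insert_of_notMem (by simp)]
  · simp

lemma gcn_eq (s : Finset ℕ) (m : ℕ) :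
    gcn s (m + 1) = (if 0 ∈ s then 1 else 0) + cnt s m := by
  induction m with
  | zero =>
    by_cases h : 0 ∈ s <;> simp [gcn, cnt, Finset.range_one, Finset.filter_singleton, h]
  | succ m ih => rw [gcn_succ, ih, cnt_succ]; ring

lemma gcn_le_card (s : Finset ℕ) (m : ℕ) : gcn s m ≤ s.card :=
  Finset.card_le_card (fun x hx => (Finset.mem_filter.1 hx).2)

lemma gcn_mono (s : Finset ℕ) {m m' : ℕ} (h : m ≤ m') : gcn s m ≤ gcn s m' :=
  Finset.card_le_card (Finset.filter_subset_filter _ (Finset.range_subset_range.2 h))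

lemma cnt_mono (s : Finset ℕ) {m m' : ℕ} (h : m ≤ m') : cnt s m ≤ cnt s m' :=
  Finset.card_le_card (Finset.filter_subset_filter _ (Finset.range_subset_range.2 h))

lemma cnt_le_card (s : Finset ℕ) (m : ℕ) : cnt s m ≤ s.card := by
  classical
  have : ((Finset.range m).filter (fun j => j + 1 ∈ s)).card
      = (((Finset.range m).filter (fun j => j + 1 ∈ s)).image (· + 1)).card := by
    rw [Finset.card_image_of_injective _ (add_left_injective 1)]
  rw [cnt, this]
  exact Finset.card_le_card (by
    intro x hx
    simp only [Finset.mem_image, Finset.mem_filter] at hx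
    obtain ⟨j, ⟨_, hj⟩, rfl⟩ := hx
    exact hj)

lemma cnt_eq_of_free (s : Finset ℕ) {m m' : ℕ} (hle : m ≤ m')
    (h : ∀ p, m < p → p ≤ m' → p ∉ s) : cnt s m' = cnt s m := by
  unfold cnt
  congr 1
  apply Finset.Subset.antisymm
  · intro j hj
    simp only [Finset.mem_filter, Finset.mem_range] at hj ⊢
    refine ⟨?_, hj.2⟩
    by_contra hc
    exact h (j + 1) (by omega) (by omega) hj.2
  · exact Finset.filter_subset_filter _ (Finset.range_subset_range.2 hle)

lemma gcn_shift (s : Finset ℕ) (Δ m : ℕ) : gcn (s.image (· + Δ)) m ≤ gcn s m := by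
  classical
  apply Finset.card_le_card_of_injOn (fun j => j - Δ)
  · intro j hj
    simp only [Finset.mem_coe, Finset.mem_filter, Finset.mem_range, Finset.mem_image] at hj ⊢
    obtain ⟨hjm, e, he, rfl⟩ := hj
    constructor
    · omega
    · simpa using he
  · intro x hx y hy hxy
    simp only [Finset.coe_filter, Set.mem_setOf_eq, Finset.mem_range, Finset.mem_image] at hx hy
    obtain ⟨_, e, _, rfl⟩ := hx
    obtain ⟨_, e', _, rfl⟩ := hy
    simp only at hxy
    omega


lemma len_flatMap (c : List Bool) (δ γ : Finset ℕ) (b : ℕ → Bool) (m : ℕ) :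
    ((List.range m).flatMap (rf c δ γ b)).length + cnt δ m = m + cnt γ m := by
  induction m with
  | zero => simp [cnt]
  | succ m ih =>
    rw [List.range_succ, List.flatMap_append, List.length_append, cnt_succ, cnt_succ]
    have : ([m].flatMap (rf c δ γ b)).length
        = (if m + 1 ∈ δ then 0 else 1) + (if m + 1 ∈ γ then 1 else 0) := by
      simp only [List.flatMap_cons, List.flatMap_nil, List.append_nil, rf, List.length_append]
      split <;> split <;> simp
    rw [this]
    split <;> split <;> omega

lemma getD_append_len (l r : List Bool) : (l ++ r).getD l.length false = r.getD 0 false := by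
  simp [List.getD_eq_getElem?_getD, List.getElem?_append_right (le_refl _)]

lemma getD_flatMap (c : List Bool) (δ γ : Finset ℕ) (b : ℕ → Bool) (j m : ℕ)
    (hj : j < m) (hδj : (j + 1) ∉ δ) :
    ((List.range m).flatMap (rf c δ γ b)).getD
        (((List.range j).flatMap (rf c δ γ b)).length) false = c.getD j false := by
  have hm : m = (j + 1) + (m - (j + 1)) := by omega
  rw [hm, List.range_add, List.flatMap_append, List.range_succ, List.flatMap_append,
    List.flatMap_cons, List.flatMap_nil, List.append_nil, List.append_assoc,
    getD_append_len]
  rw [rf, if_neg hδj]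
  simp


lemma insDelRead_eq (c : List Bool) (δ γ : Finset ℕ) (b : ℕ → Bool) :
    insDelRead c δ γ b =
      (if 0 ∈ γ then [b 0] else []) ++ (List.range c.length).flatMap (rf c δ γ b) := rfl

/-- reading `c_p` (1-based `p`, `p ∉ δ`, `p ≤ n`) from the full read. -/
lemma read_getD (c : List Bool) (δ γ : Finset ℕ) (b : ℕ → Bool) (p : ℕ)
    (hp1 : 1 ≤ p) (hpn : p ≤ c.length) (hδp : p ∉ δ) :
    (insDelRead c δ γ b).getD
        ((if 0 ∈ γ then 1 else 0) +
          ((List.range (p - 1)).flatMap (rf c δ γ b)).length) false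
      = c.getD (p - 1) false := by
  have h := getD_flatMap c δ γ b (p - 1) c.length (by omega) (by
    have : p - 1 + 1 = p := by omega
    rw [this]; exact hδp)
  rw [insDelRead_eq]
  by_cases h0 : 0 ∈ γ
  · rw [if_pos h0, if_pos h0]
    have : (1 : ℕ) + ((List.range (p - 1)).flatMap (rf c δ γ b)).length
        = [b 0].length + ((List.range (p - 1)).flatMap (rf c δ γ b)).length := by simp
    rw [this]
    rw [List.getD_eq_getElem?_getD, List.getElem?_append_right (by simp)]
    simpa [List.getD_eq_getElem?_getD] using h
  · rw [if_neg h0, if_neg h0]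
    simpa using h

lemma read_length (c : List Bool) (δ γ : Finset ℕ) (b : ℕ → Bool) :
    (insDelRead c δ γ b).length + cnt δ c.length
      = (if 0 ∈ γ then 1 else 0) + c.length + cnt γ c.length := by
  rw [insDelRead_eq, List.length_append]
  have := len_flatMap c δ γ b c.length
  by_cases h0 : 0 ∈ γ <;> simp only [h0, if_true, if_false, List.length_cons,
    List.length_nil] <;> omega

lemma cnt_full (s : Finset ℕ) (m : ℕ) (h : s.card ≤ cnt s m) : ∀ q ∈ s, q ≤ m := by
  classical
  set F := (Finset.range m).filter (fun j => j + 1 ∈ s) with hF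
  have himg : F.image (· + 1) ⊆ s := by
    intro x hx
    simp only [Finset.mem_image, hF, Finset.mem_filter] at hx
    obtain ⟨j, ⟨_, hj⟩, rfl⟩ := hx
    exact hj
  have hcard : s.card ≤ (F.image (· + 1)).card := by
    rw [Finset.card_image_of_injective _ (add_left_injective 1)]
    exact h
  have heq : F.image (· + 1) = s := Finset.eq_of_subset_of_card_le himg hcard
  intro q hq
  rw [← heq] at hq
  simp only [Finset.mem_image, hF, Finset.mem_filter, Finset.mem_range] at hq
  obtain ⟨j, ⟨hj, _⟩, rfl⟩ := hq
  omega


/-- Main per-head lemma: an error-free head reads a shifted copy of `c`. -/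
lemma head_read (c : List Bool) (n k a istar : ℕ) (δ γ : Finset ℕ) (b : ℕ → Bool)
    (hc : c.length = n)
    (hδr : ∀ p ∈ δ, 1 ≤ p ∧ p ≤ n)
    (herr : δ.card + γ.card ≤ k)
    (ha : 1 ≤ a)
    (hfree : ∀ p, a ≤ p → p ≤ istar + k - 1 → p ∉ δ ∧ p ∉ γ)
    (histarn : istar + k ≤ n + 1)
    (j : ℕ) (hj1 : a + k ≤ j) (hj2 : j ≤ istar) :
    (insDelRead c δ γ b).getD (j - 1) false
      = c.getD (j + cnt δ (a - 1) - gcn γ a - 1) false := by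
  obtain ⟨a', rfl⟩ : ∃ a', a = a' + 1 := ⟨a - 1, by omega⟩
  simp only [Nat.add_sub_cancel]
  set D := cnt δ a' with hDdef
  set G := gcn γ (a' + 1) with hGdef
  set P : ℕ := if 0 ∈ γ then 1 else 0 with hPdef
  have hGP : G = P + cnt γ a' := gcn_eq γ a'
  have hD_le : D ≤ k := le_trans (cnt_le_card _ _) (by omega)
  have hG_le : G ≤ k := le_trans (gcn_le_card _ _) (by omega)
  set p : ℕ := j + D - G with hpdef
  have hpa : a' + 1 ≤ p := by omega
  have hpk : p ≤ istar + k := by omega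
  -- counts at p-1 agree with counts at a-1
  have hδcnt : cnt δ (p - 1) = D := by
    rw [hDdef]
    exact cnt_eq_of_free δ (by omega) (fun q hq1 hq2 => (hfree q (by omega) (by omega)).1)
  have hγcnt : cnt γ (p - 1) = cnt γ a' := by
    exact cnt_eq_of_free γ (by omega) (fun q hq1 hq2 => (hfree q (by omega) (by omega)).2)
  -- if counts are full, all elements are small
  by_cases hpn : p ≤ n
  · -- the position read is a genuine position of c
    have hpδ : p ∉ δ := by
      intro hmem
      by_cases hpe : p ≤ istar + k - 1
      · exact (hfree p hpa hpe).1 hmem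
      · have hpk' : p = istar + k := by omega
        have hDk : δ.card ≤ cnt δ a' := by omega
        have := cnt_full δ a' hDk p hmem
        omega
    have hr := read_getD c δ γ b p (by omega) (by omega) hpδ
    have hlen := len_flatMap c δ γ b (p - 1)
    rw [hδcnt, hγcnt] at hlen
    have hidx : j - 1 = P + ((List.range (p - 1)).flatMap (rf c δ γ b)).length := by omega
    rw [hidx, hr]
  · -- edge case: the index is past the end of the read, both sides default
    have hpk' : p = istar + k := by omega
    have hn : istar + k = n + 1 := by omega
    have h1 : D = k ∧ G = 0 := by omega
    have hδcard : δ.card = k := le_antisymm (by omega) (by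
      have := cnt_le_card δ a'; omega)
    have hγcard : γ.card = 0 := by omega
    have hγempty : γ = ∅ := Finset.card_eq_zero.1 hγcard
    subst hγempty
    have hcntδn : cnt δ n = k := le_antisymm (by have := cnt_le_card δ n; omega)
      (by have := cnt_mono δ (show a' ≤ n by omega); omega)
    have hcntγn : cnt (∅ : Finset ℕ) n = 0 := by simp [cnt]
    have hlen := read_length c δ (∅ : Finset ℕ) b
    rw [hc, hcntδn, hcntγn] at hlen
    simp only [Finset.notMem_empty, if_false] at hlen
    have hlen' : (insDelRead c δ ∅ b).length = n - k := by omega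
    rw [List.getD_eq_default _ _ (by omega), List.getD_eq_default _ _ (by rw [hc]; omega)]


lemma period_contra (c : List Bool) (n k T a istar D₁ G₁ D₂ G₂ : ℕ)
    (hL : ∀ a b ℓ, 1 ≤ a → b ≤ n → 1 ≤ ℓ → ℓ ≤ k →
      (∀ j, a ≤ j → j + ℓ ≤ b → c.getD (j - 1) false = c.getD (j + ℓ - 1) false) →
      b + 1 ≤ a + T)
    (hista : a + (T + 2 * k + 1) = istar) (histarn : istar + k ≤ n + 1) (ha : 1 ≤ a)
    (hD₁ : D₁ ≤ k) (hG₁ : G₁ ≤ k) (hD₂ : D₂ ≤ k) (hG₂ : G₂ ≤ k)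
    (hord : (D₂ ≤ D₁ ∧ G₂ ≤ G₁) ∨ (D₁ ≤ D₂ ∧ G₁ ≤ G₂))
    (hagc : ∀ j, a + k ≤ j → j ≤ istar - 1 →
      c.getD (j + D₁ - G₁ - 1) false = c.getD (j + D₂ - G₂ - 1) false)
    (hlt : G₂ + D₁ < G₁ + D₂) : False := by
  set ℓ : ℕ := (G₁ + D₂) - (G₂ + D₁) with hldef
  have hl1 : 1 ≤ ℓ := by omega
  have hlk : ℓ ≤ k := by omega
  have := hL (a + k + D₁ - G₁) (istar - 1 + D₂ - G₂) ℓ (by omega) (by omega) hl1 hlk ?_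
  · omega
  · intro q hq1 hq2
    have h1 : q + D₁ = (q + G₁ - D₁) + D₁ - G₁ + D₁ := by omega
    have hj1 : a + k ≤ q + G₁ - D₁ := by omega
    have hj2 : q + G₁ - D₁ ≤ istar - 1 := by omega
    have h := hagc (q + G₁ - D₁) hj1 hj2
    have e1 : q + G₁ - D₁ + D₁ - G₁ - 1 = q - 1 := by omega
    have e2 : q + G₁ - D₁ + D₂ - G₂ - 1 = q + ℓ - 1 := by omega
    rwa [e1, e2] at h

lemma chain (d t : ℕ) (δ γ : ℕ → Finset ℕ)
    (hshift : ∀ w, 1 ≤ w → w ≤ d - 1 →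
      δ (w + 1) = (δ w).image (· + t) ∧ γ (w + 1) = (γ w).image (· + t)) :
    ∀ m u, 1 ≤ u → u + m ≤ d →
      δ (u + m) = (δ u).image (· + m * t) ∧ γ (u + m) = (γ u).image (· + m * t) := by
  intro m
  induction m with
  | zero =>
    intro u hu hud
    constructor <;> · ext x; simp
  | succ m ih =>
    intro u hu hud
    have hm := ih u hu (by omega)
    have hs := hshift (u + m) (by omega) (by omega)
    have harr : u + (m + 1) = (u + m) + 1 := by omega
    rw [harr, hs.1, hs.2, hm.1, hm.2, Finset.image_image, Finset.image_image]
    constructor <;> · apply Finset.image_congr; intro x hx; simp; ring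



lemma cnt_eq_gcn (s : Finset ℕ) (m : ℕ) (h0 : 0 ∉ s) : cnt s m = gcn s (m + 1) := by
  rw [gcn_eq, if_neg h0, zero_add]

lemma shift_cnt_le (s s' : Finset ℕ) (Δ a : ℕ) (ha : 1 ≤ a) (h0 : 0 ∉ s) (h0' : 0 ∉ s')
    (hs : s' = s.image (· + Δ)) : cnt s' (a - 1) ≤ cnt s (a - 1) := by
  rw [cnt_eq_gcn _ _ h0', cnt_eq_gcn _ _ h0]
  have hm : a - 1 + 1 = a := by omega
  rw [hm, hs]
  exact gcn_shift s Δ a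


end Stmt17

/-- Proposition `majoritybit`: let `c` of length `n` satisfy
`L(c, ≤ k) ≤ T`, and let `E` be a `d`-row read matrix from `c`, head `w` having
deletion set `δ w` and insertion set `γ w` (`δ(w+1) = δ w + t`,
`γ(w+1) = γ w + t`) with at most `k` errors in total.  Let `i* > 0` be a column
on whose window `[i*-T-2k-1, i*-1]` all rows agree.  If heads `w₁` and `w₂` have
no errors in `[i*-T-2k-1, i*+k-1]`, then `E_{w₁,i*} = E_{w₂,i*}`. -/
theorem stmt17 (n d k T t istar : ℕ) (c : List Bool) (hc : c.length = n)
    (hL : ∀ a b ℓ, 1 ≤ a → b ≤ n → 1 ≤ ℓ → ℓ ≤ k →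
      (∀ j, a ≤ j → j + ℓ ≤ b → c.getD (j - 1) false = c.getD (j + ℓ - 1) false) →
      b + 1 ≤ a + T)
    (δ γ : ℕ → Finset ℕ) (b : ℕ → ℕ → Bool)
    (hδrange : ∀ w, 1 ≤ w → w ≤ d → ∀ p ∈ δ w, 1 ≤ p ∧ p ≤ n)
    (hγrange : ∀ w, 1 ≤ w → w ≤ d → ∀ p ∈ γ w, p ≤ n)
    (herr : ∀ w, 1 ≤ w → w ≤ d → (δ w).card + (γ w).card ≤ k)
    (hshift : ∀ w, 1 ≤ w → w ≤ d - 1 →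
      δ (w + 1) = (δ w).image (· + t) ∧ γ (w + 1) = (γ w).image (· + t))
    (histar : T + 2 * k + 2 ≤ istar) (histarn : istar + k ≤ n + 1)
    (hagree : ∀ w w', 1 ≤ w → w ≤ d → 1 ≤ w' → w' ≤ d →
      ∀ j, istar - T - 2 * k - 1 ≤ j → j ≤ istar - 1 →
        (insDelRead c (δ w) (γ w) (b w)).getD (j - 1) false =
          (insDelRead c (δ w') (γ w') (b w')).getD (j - 1) false)
    (w₁ w₂ : ℕ) (hw₁ : 1 ≤ w₁ ∧ w₁ ≤ d) (hw₂ : 1 ≤ w₂ ∧ w₂ ≤ d)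
    (hfree₁ : ∀ p, istar - T - 2 * k - 1 ≤ p → p ≤ istar + k - 1 →
      p ∉ δ w₁ ∧ p ∉ γ w₁)
    (hfree₂ : ∀ p, istar - T - 2 * k - 1 ≤ p → p ≤ istar + k - 1 →
      p ∉ δ w₂ ∧ p ∉ γ w₂) :
    (insDelRead c (δ w₁) (γ w₁) (b w₁)).getD (istar - 1) false =
      (insDelRead c (δ w₂) (γ w₂) (b w₂)).getD (istar - 1) false := by 
  set a := istar - T - 2 * k - 1 with hadef
  have hista : a + (T + 2 * k + 1) = istar := by omega
  have ha : 1 ≤ a := by omega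
  have herr₁ := herr w₁ hw₁.1 hw₁.2
  have herr₂ := herr w₂ hw₂.1 hw₂.2
  have h0₁ : 0 ∉ δ w₁ := fun h => by have := (hδrange w₁ hw₁.1 hw₁.2 0 h).1; omega
  have h0₂ : 0 ∉ δ w₂ := fun h => by have := (hδrange w₂ hw₂.1 hw₂.2 0 h).1; omega
  have hread₁ : ∀ j, a + k ≤ j → j ≤ istar →
      (insDelRead c (δ w₁) (γ w₁) (b w₁)).getD (j - 1) false
        = c.getD (j + Stmt17.cnt (δ w₁) (a - 1) - Stmt17.gcn (γ w₁) a - 1) false :=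
    fun j hj1 hj2 => Stmt17.head_read c n k a istar (δ w₁) (γ w₁) (b w₁) hc
      (hδrange w₁ hw₁.1 hw₁.2) herr₁ ha hfree₁ histarn j hj1 hj2
  have hread₂ : ∀ j, a + k ≤ j → j ≤ istar →
      (insDelRead c (δ w₂) (γ w₂) (b w₂)).getD (j - 1) false
        = c.getD (j + Stmt17.cnt (δ w₂) (a - 1) - Stmt17.gcn (γ w₂) a - 1) false :=
    fun j hj1 hj2 => Stmt17.head_read c n k a istar (δ w₂) (γ w₂) (b w₂) hc
      (hδrange w₂ hw₂.1 hw₂.2) herr₂ ha hfree₂ histarn j hj1 hj2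
  set D₁ := Stmt17.cnt (δ w₁) (a - 1) with hD₁def
  set G₁ := Stmt17.gcn (γ w₁) a with hG₁def
  set D₂ := Stmt17.cnt (δ w₂) (a - 1) with hD₂def
  set G₂ := Stmt17.gcn (γ w₂) a with hG₂def
  have hD₁k : D₁ ≤ k := le_trans (Stmt17.cnt_le_card _ _) (by omega)
  have hD₂k : D₂ ≤ k := le_trans (Stmt17.cnt_le_card _ _) (by omega)
  have hG₁k : G₁ ≤ k := le_trans (Stmt17.gcn_le_card _ _) (by omega)
  have hG₂k : G₂ ≤ k := le_trans (Stmt17.gcn_le_card _ _) (by omega)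
  -- ordering of drifts from the shift structure of the heads
  have hord : (D₂ ≤ D₁ ∧ G₂ ≤ G₁) ∨ (D₁ ≤ D₂ ∧ G₁ ≤ G₂) := by
    rcases le_total w₁ w₂ with hw | hw
    · left
      obtain ⟨Δ, hΔ⟩ : ∃ Δ, w₂ = w₁ + Δ := ⟨w₂ - w₁, by omega⟩
      have hch := Stmt17.chain d t δ γ hshift Δ w₁ hw₁.1 (by omega)
      rw [← hΔ] at hch
      constructor
      · exact Stmt17.shift_cnt_le (δ w₁) (δ w₂) (Δ * t) a ha h0₁ h0₂ hch.1
      · rw [hG₂def, hG₁def, hch.2]; exact Stmt17.gcn_shift _ _ _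
    · right
      obtain ⟨Δ, hΔ⟩ : ∃ Δ, w₁ = w₂ + Δ := ⟨w₁ - w₂, by omega⟩
      have hch := Stmt17.chain d t δ γ hshift Δ w₂ hw₂.1 (by omega)
      rw [← hΔ] at hch
      constructor
      · exact Stmt17.shift_cnt_le (δ w₂) (δ w₁) (Δ * t) a ha h0₂ h0₁ hch.1
      · rw [hG₂def, hG₁def, hch.2]; exact Stmt17.gcn_shift _ _ _
  -- agreement of the two shifted copies of c on the window
  have hagc : ∀ j, a + k ≤ j → j ≤ istar - 1 →
      c.getD (j + D₁ - G₁ - 1) false = c.getD (j + D₂ - G₂ - 1) false := by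
    intro j hj1 hj2
    rw [← hread₁ j hj1 (by omega), ← hread₂ j hj1 (by omega)]
    exact hagree w₁ w₂ hw₁.1 hw₁.2 hw₂.1 hw₂.2 j (by omega) hj2
  -- the drifts of the two heads coincide
  have hkey : G₁ + D₂ = G₂ + D₁ := by
    by_contra hne
    rcases Nat.lt_or_ge (G₂ + D₁) (G₁ + D₂) with h | h
    · exact Stmt17.period_contra c n k T a istar D₁ G₁ D₂ G₂ hL hista histarn ha
        hD₁k hG₁k hD₂k hG₂k hord hagc h
    · refine Stmt17.period_contra c n k T a istar D₂ G₂ D₁ G₁ hL hista histarn ha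
        hD₂k hG₂k hD₁k hG₁k hord.symm (fun j hj1 hj2 => (hagc j hj1 hj2).symm) (by omega)
  rw [hread₁ istar (by omega) le_rfl, hread₂ istar (by omega) le_rfl]
  congr 1
  omega
end

section
/- Let z ∈ {0,1}^m with m = k²/4 + 3k (k even, k ≥ 2), let y be the number of runs of 1s in z, and suppose z has at most 2k − 2 entries equal to 1. Then z contains a run of 0s of length at least k − y + 2. -/
private def rst (z : List Bool) (v : Bool) : ℕ → ℕ
  | 0 => 0
  | j+1 => if z.getD j false = v then rst z v j else j + 1

private lemma rst_le (z : List Bool) (v : Bool) : ∀ j, rst z v j ≤ j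
  | 0 => le_refl 0
  | j+1 => by
      unfold rst
      split
      · exact (rst_le z v j).trans (Nat.le_succ j)
      · exact le_refl _

private lemma rst_all (z : List Bool) (v : Bool) :
    ∀ j, z.getD j false = v → ∀ t, rst z v j ≤ t → t ≤ j → z.getD t false = v
  | 0 => fun h t _ h2 => by
      have ht : t = 0 := Nat.le_zero.mp h2
      subst ht; exact h
  | j+1 => fun h t h1 h2 => by
      unfold rst at h1
      split at h1
      · rcases Nat.lt_or_ge t (j+1) with ht | ht
        · exact rst_all z v j ‹_› t h1 (Nat.lt_succ_iff.mp ht)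
        · have : t = j+1 := le_antisymm h2 ht
          subst this; exact h
      · have : t = j+1 := le_antisymm h2 h1
        subst this; exact h

private lemma rst_start (z : List Bool) (v : Bool) :
    ∀ j, rst z v j = 0 ∨ z.getD (rst z v j - 1) false ≠ v
  | 0 => Or.inl rfl
  | j+1 => by
      unfold rst
      split
      · exact rst_start z v j
      · right; rw [Nat.add_sub_cancel]; exact ‹¬ _›

/-- let `z ∈ {0,1}^m` with `m = k²/4 + 3k` (`k` even, `k ≥ 2`),
let `y` be the number of runs of 1s in `z` (counted by the positions where a
run of 1s starts), and suppose `z` has at most `2k - 2` entries equal to 1.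
Then `z` contains a run of 0s of length at least `k - y + 2`. -/
theorem stmt18 (k : ℕ) (hk2 : 2 ≤ k) (hke : Even k) (z : List Bool)
    (hz : z.length = k ^ 2 / 4 + 3 * k)
    (y : ℕ)
    (hy : y = ((Finset.range z.length).filter (fun i =>
        z.getD i false = true ∧ (i = 0 ∨ z.getD (i - 1) false = false))).card)
    (hones : ((Finset.range z.length).filter (fun i =>
        z.getD i false = true)).card ≤ 2 * k - 2) :
    ∃ i len : ℕ, (k : ℤ) - (y : ℤ) + 2 ≤ (len : ℤ) ∧ i + len ≤ z.length ∧
      ∀ j, i ≤ j → j < i + len → z.getD j false = false := by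
  by_cases hcase : k + 2 ≤ y
  · exact ⟨0, 0, by omega, by omega, fun j h1 h2 => by omega⟩
  push_neg at hcase
  have hyk : y ≤ k + 1 := by omega
  obtain ⟨t, ht⟩ := hke
  have hm : z.length = t * t + 6 * t := by
    have h4 : k ^ 2 = 4 * (t * t) := by subst ht; ring
    omega
  set L : ℕ := k + 2 - y with hL
  have hL1 : 1 ≤ L := by omega
  by_contra hcon
  push_neg at hcon
  have H : ∀ i, i + L ≤ z.length → ∃ j, i ≤ j ∧ j < i + L ∧ z.getD j false = true := by
    intro i hi
    obtain ⟨j, h1, h2, h3⟩ := hcon i L (by omega) hi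
    exact ⟨j, h1, h2, by simpa using h3⟩
  set Z := (Finset.range z.length).filter (fun i => z.getD i false = false) with hZ
  set O := (Finset.range z.length).filter (fun i => z.getD i false = true) with hO
  set S0 := (Finset.range z.length).filter
      (fun i => z.getD i false = false ∧ (i = 0 ∨ z.getD (i-1) false = true)) with hS0
  set S1 := (Finset.range z.length).filter (fun i =>
      z.getD i false = true ∧ (i = 0 ∨ z.getD (i - 1) false = false)) with hS1
  -- Step A : Z.card + O.card = z.length
  have hA : Z.card + O.card = z.length := by
    have : O = (Finset.range z.length).filter (fun i => ¬ z.getD i false = false) := by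
      apply Finset.filter_congr
      intro i _
      simp
    rw [hZ, this, Finset.card_filter_add_card_filter_not, Finset.card_range]
  -- Step B : Z.card ≤ (L - 1) * S0.card
  have hB : Z.card ≤ (L - 1) * S0.card := by
    apply Finset.card_le_mul_card_image_of_maps_to (f := fun j => rst z false j)
    · intro j hj
      rw [hZ, Finset.mem_filter, Finset.mem_range] at hj
      rw [hS0, Finset.mem_filter, Finset.mem_range]
      refine ⟨lt_of_le_of_lt (rst_le z false j) hj.1, ?_, ?_⟩
      · exact rst_all z false j hj.2 _ le_rfl (rst_le z false j)
      · rcases rst_start z false j with h | h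
        · exact Or.inl h
        · exact Or.inr (by simpa using h)
    · intro a ha
      have hsub : (Z.filter (fun j => rst z false j = a)) ⊆ Finset.Ico a (a + (L - 1)) := by
        intro j hj
        rw [Finset.mem_filter, hZ, Finset.mem_filter, Finset.mem_range] at hj
        obtain ⟨⟨hjm, hjf⟩, hja⟩ := hj
        have hale : a ≤ j := hja ▸ rst_le z false j
        rw [Finset.mem_Ico]
        refine ⟨hale, ?_⟩
        by_contra hnot
        push_neg at hnot
        have hwin : a + L ≤ z.length := by omega
        obtain ⟨j', h1, h2, h3⟩ := H a hwin
        have hj'le : j' ≤ j := by omega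
        have : z.getD j' false = false := rst_all z false j hjf j' (hja ▸ h1) hj'le
        rw [this] at h3
        exact Bool.false_ne_true h3
      calc (Z.filter (fun j => rst z false j = a)).card
          ≤ (Finset.Ico a (a + (L - 1))).card := Finset.card_le_card hsub
        _ = L - 1 := by rw [Nat.card_Ico]; omega
  -- Step C : S0.card ≤ S1.card + 1
  have hC : S0.card ≤ S1.card + 1 := by
    have hsub : S0 ⊆ insert 0 (S0.erase 0) := by
      rw [Finset.subset_insert_iff]
    have h1 : S0.card ≤ (S0.erase 0).card + 1 :=
      le_trans (Finset.card_le_card hsub) (Finset.card_insert_le _ _)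
    have h2 : (S0.erase 0).card ≤ S1.card := by
      apply Finset.card_le_card_of_injOn (fun i => rst z true (i - 1))
      · intro i hi
        rw [Finset.mem_coe, Finset.mem_erase, hS0, Finset.mem_filter, Finset.mem_range] at hi
        obtain ⟨hi0, him, hif, hstart⟩ := hi
        have hprev : z.getD (i - 1) false = true := by
          rcases hstart with h | h
          · exact absurd h hi0
          · exact h
        rw [Finset.mem_coe, hS1, Finset.mem_filter, Finset.mem_range]
        refine ⟨lt_of_le_of_lt (le_trans (rst_le z true (i-1)) (by omega)) him, ?_, ?_⟩
        · exact rst_all z true (i-1) hprev _ le_rfl (rst_le z true (i-1))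
        · rcases rst_start z true (i-1) with h | h
          · exact Or.inl h
          · exact Or.inr (by simpa using h)
      · -- injectivity
        have key : ∀ i ∈ S0.erase 0, ∀ i' ∈ S0.erase 0, i < i' →
            rst z true (i - 1) ≠ rst z true (i' - 1) := by
          intro i hi i' hi' hlt
          rw [Finset.mem_erase, hS0, Finset.mem_filter, Finset.mem_range] at hi hi'
          obtain ⟨hi0, _, hif, _⟩ := hi
          obtain ⟨hi'0, _, _, hstart'⟩ := hi'
          have hprev' : z.getD (i' - 1) false = true := by
            rcases hstart' with h | h
            · exact absurd h hi'0
            · exact h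
          intro heq
          have ha'le : rst z true (i' - 1) ≤ i' - 1 := rst_le z true (i' - 1)
          have hale : rst z true (i - 1) ≤ i - 1 := rst_le z true (i - 1)
          have hii : i ≤ i' - 1 := by omega
          have : rst z true (i' - 1) ≤ i := by omega
          have : z.getD i false = true := rst_all z true (i' - 1) hprev' i this hii
          rw [hif] at this
          exact Bool.false_ne_true this
        intro i hi i' hi' heq
        rcases lt_trichotomy i i' with h | h | h
        · exact absurd heq (key i hi i' hi' h)
        · exact h
        · exact absurd heq.symm (key i' hi' i hi h)
    omega
  -- cardinalities
  have hOcard : O.card ≤ 2 * k - 2 := hones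
  have hS1card : S1.card = y := hy.symm
  -- final arithmetic
  have hfin : z.length ≤ (L - 1) * (y + 1) + (2 * k - 2) := by
    have : (L - 1) * S0.card ≤ (L - 1) * (y + 1) :=
      Nat.mul_le_mul_left _ (by omega)
    omega
  -- (L-1) = k + 1 - y ; show (k+1-y)*(y+1) ≤ (t+1)*(t+1)
  have hkey : (L - 1) * (y + 1) ≤ (t + 1) * (t + 1) := by
    have hcast : ((L - 1 : ℕ) : ℤ) = 2 * (t : ℤ) + 1 - (y : ℤ) := by omega
    have h2 : ((L - 1 : ℕ) : ℤ) * ((y : ℤ) + 1) ≤ ((t : ℤ) + 1) * ((t : ℤ) + 1) := by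
      rw [hcast]; nlinarith [sq_nonneg ((t : ℤ) - (y : ℤ))]
    exact_mod_cast h2
  have hexp : (t + 1) * (t + 1) = t * t + 2 * t + 1 := by ring
  omega
end
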